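/- Fix μ ∈ X and a Borel probability measure P on X. If the metric spatial depth satisfies D(μ; P) = 2, then the metric lens depth satisfies D_L(μ; P) = 1. -/
import Mathlib


open MeasureTheory
open scoped Classical

/-- The kernel `h` of the metric spatial depth. -/
noncomputable def mh {X : Type*} [MetricSpace X] (x₁ x₂ x₃ : X) : ℝ :=
  if x₃ = x₁ ∨ x₃ = x₂ then 0
  else (dist x₁ x₃ ^ 2 + dist x₂ x₃ ^ 2 - dist x₁ x₂ ^ 2) / (dist x₁ x₃ * dist x₂ x₃)

/-- The metric spatial depth of `μ` with respect to the measure `P`. -/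
noncomputable def msDepth {X : Type*} [MetricSpace X] [MeasurableSpace X]
    (μ : X) (P : Measure X) : ℝ :=
  1 - (1 / 2) * ∫ x₁, ∫ x₂, mh x₁ x₂ μ ∂P ∂P

/-- The metric lens depth of `μ` with respect to `P`. -/
noncomputable def lensDepth {X : Type*} [MetricSpace X] [MeasurableSpace X]
    (μ : X) (P : Measure X) : ENNReal :=
  (P.prod P) {p : X × X | dist p.1 p.2 ≥ max (dist p.1 μ) (dist p.2 μ)}

lemma mh_abs_le {X : Type*} [MetricSpace X] (x₁ x₂ x₃ : X) : |mh x₁ x₂ x₃| ≤ 2 := by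
  unfold mh
  split_ifs with hc
  · simp
  · push_neg at hc
    have ha : 0 < dist x₁ x₃ := dist_pos.mpr fun e => hc.1 e.symm
    have hb : 0 < dist x₂ x₃ := dist_pos.mpr fun e => hc.2 e.symm
    have t1 : dist x₁ x₂ ≤ dist x₁ x₃ + dist x₂ x₃ := by
      have := dist_triangle x₁ x₃ x₂
      rw [dist_comm x₃ x₂] at this
      linarith
    have t2 : |dist x₁ x₃ - dist x₂ x₃| ≤ dist x₁ x₂ := abs_dist_sub_le x₁ x₂ x₃
    rw [abs_le] at t2
    have hcn : 0 ≤ dist x₁ x₂ := dist_nonneg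
    rw [abs_div, abs_of_pos (mul_pos ha hb), div_le_iff₀ (mul_pos ha hb)]
    rw [abs_le]
    constructor <;> nlinarith

lemma mh_ge {X : Type*} [MetricSpace X] (x₁ x₂ x₃ : X) : -2 ≤ mh x₁ x₂ x₃ :=
  neg_le_of_abs_le (mh_abs_le x₁ x₂ x₃)

lemma mh_eq_neg_two {X : Type*} [MetricSpace X] {x₁ x₂ x₃ : X}
    (h : mh x₁ x₂ x₃ = -2) : dist x₁ x₂ ≥ max (dist x₁ x₃) (dist x₂ x₃) := by
  unfold mh at h
  split_ifs at h with hc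
  · norm_num at h
  · push_neg at hc
    have ha : 0 < dist x₁ x₃ := dist_pos.mpr fun e => hc.1 e.symm
    have hb : 0 < dist x₂ x₃ := dist_pos.mpr fun e => hc.2 e.symm
    rw [div_eq_iff (ne_of_gt (mul_pos ha hb))] at h
    have hcn : 0 ≤ dist x₁ x₂ := dist_nonneg
    have h2 : (dist x₁ x₂ - (dist x₁ x₃ + dist x₂ x₃)) *
        (dist x₁ x₂ + (dist x₁ x₃ + dist x₂ x₃)) = 0 := by nlinarith
    rcases mul_eq_zero.mp h2 with h3 | h3
    · have : dist x₁ x₂ = dist x₁ x₃ + dist x₂ x₃ := by linarith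
      rw [ge_iff_le, this]
      exact max_le (by linarith) (by linarith)
    · linarith

theorem msDepth_two_imp_lensDepth_one {X : Type*} [MetricSpace X] [CompleteSpace X]
    [SecondCountableTopology X] [MeasurableSpace X] [BorelSpace X]
    (μ : X) (P : Measure X) [IsProbabilityMeasure P]
    (h : msDepth μ P = 2) : lensDepth μ P = 1 := by
  classical
  set f : X × X → ℝ := fun p => mh p.1 p.2 μ with hf
  have hfm : Measurable f := by
    have h1 : MeasurableSet {p : X × X | μ = p.1 ∨ μ = p.2} := by
      have he : {p : X × X | μ = p.1 ∨ μ = p.2} =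
          (Prod.fst ⁻¹' {μ}) ∪ (Prod.snd ⁻¹' {μ}) := by
        ext p; simp [eq_comm]
      rw [he]
      exact (measurable_fst (measurableSet_singleton μ)).union
        (measurable_snd (measurableSet_singleton μ))
    have h2 : Measurable fun p : X × X =>
        (dist p.1 μ ^ 2 + dist p.2 μ ^ 2 - dist p.1 p.2 ^ 2) / (dist p.1 μ * dist p.2 μ) := by
      apply Measurable.div
      · exact (((continuous_fst.dist continuous_const).pow 2).add
          ((continuous_snd.dist continuous_const).pow 2)).sub
          ((continuous_fst.dist continuous_snd).pow 2) |>.measurable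
      · exact ((continuous_fst.dist continuous_const).mul
          (continuous_snd.dist continuous_const)).measurable
    simpa [hf, mh] using Measurable.ite h1 measurable_const h2
  have hfint : Integrable f (P.prod P) := by
    apply (integrable_const (2 : ℝ)).mono' hfm.aestronglyMeasurable
    exact ae_of_all _ fun p => by simpa [hf, Real.norm_eq_abs] using mh_abs_le p.1 p.2 μ
  have hI : ∫ p, f p ∂(P.prod P) = -2 := by
    have := integral_integral (f := fun x₁ x₂ => mh x₁ x₂ μ) (μ := P) (ν := P) hfint
    unfold msDepth at h
    rw [this] at h
    show ∫ z : X × X, mh z.1 z.2 μ ∂(P.prod P) = -2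
    linarith
  have hg : ∀ᵐ p ∂(P.prod P), f p + 2 = 0 := by
    have hgn : 0 ≤ fun p => f p + 2 := fun p => by
      have := mh_ge p.1 p.2 μ; simp [hf]; linarith
    have hgint : Integrable (fun p => f p + 2) (P.prod P) :=
      hfint.add (integrable_const 2)
    have hgz : ∫ p, (f p + 2) ∂(P.prod P) = 0 := by
      rw [integral_add hfint (integrable_const 2), hI]
      simp
    have := (integral_eq_zero_iff_of_nonneg hgn hgint).mp hgz
    filter_upwards [this] with p hp using hp
  have hae : ∀ᵐ p ∂(P.prod P), dist p.1 p.2 ≥ max (dist p.1 μ) (dist p.2 μ) := by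
    filter_upwards [hg] with p hp
    exact mh_eq_neg_two (by simp [hf] at hp ⊢; linarith)
  unfold lensDepth
  set S := {p : X × X | dist p.1 p.2 ≥ max (dist p.1 μ) (dist p.2 μ)} with hS
  have hcompl : (P.prod P) Sᶜ = 0 := by
    rw [ae_iff] at hae
    exact hae
  refine le_antisymm prob_le_one ?_
  have h1 : (1 : ENNReal) = (P.prod P) Set.univ := (measure_univ).symm
  rw [h1, ← Set.union_compl_self S]
  calc (P.prod P) (S ∪ Sᶜ) ≤ (P.prod P) S + (P.prod P) Sᶜ := measure_union_le _ _
    _ = (P.prod P) S := by rw [hcompl, add_zero]
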